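/- Let (R, d) be an infinite minimal divisive meadow, i.e., R is infinite and the only subring of R closed under d is R itself. Suppose that for every positive integer k there exist integers n, m such that 1 + d 1 ((k : R)) = d ((n : R)) ((m : R)) in R (i.e., every closed fraction 1 + 1/k is equal in R to a simple closed fraction). Then R is isomorphic to the divisive meadow of rational numbers: there exists a ring isomorphism e : R ≃ ℚ such that e (d x y) = e x / e y for all x, y ∈ R, where / is the zero-totalized division of ℚ (a/0 = 0, as in Mathlib). (An infinite minimal divisive meadow admits transformation into simple fractions for closed terms only if it is isomorphic to ℚ.) -/

import Mathlib

/-!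
Write `x⁻¹` for `d 1 x`. The axioms say that `x⁻¹` is the unique pseudo-inverse of `x`
(`x * x * x⁻¹ = x`, `x⁻¹ * x⁻¹ * x = x⁻¹`), so every ring hom from a field into `R` commutes with
division, and every finite subring of `R` (a finite reduced ring, hence a product of finite fields)
is closed under division. By minimality the prime subring is therefore infinite, i.e. `R` has
characteristic zero. The equation `1 + k⁻¹ = n / m` then forces `k * k⁻¹ = 1`: multiplied by the
idempotent `c = k * k⁻¹ * m * m⁻¹` it gives `((k + 1) * m - n * k) * c = 0`, and as
`k * (k + 1) * (1 - c) = 0`, characteristic zero yields `(k + 1) * m = n * k` in `ℤ`, so `k ∣ m`;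
multiplied by the idempotent `1 - k * k⁻¹`, which `k` and hence `m` annihilate, it reads `1 = 0`.
Hence `ℤ → R` extends to `ℚ → R`, whose image is closed under division and so is all of `R`.
-/

def IsPseudoInverse {M : Type*} [Mul M] (x a : M) : Prop :=
  x * x * a = x ∧ a * a * x = a

namespace IsPseudoInverse

variable {R : Type*} [CommRing R] {x a b : R}

theorem unique (ha : IsPseudoInverse x a) (hb : IsPseudoInverse x b) : a = b := by
  linear_combination (-1 + x * b) * ha.2 - a * a * hb.1 + (1 - x * a) * hb.2 + b * b * ha.1

theorem map {S F : Type*} [CommRing S] [FunLike F R S] [RingHomClass F R S] (f : F)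
    (h : IsPseudoInverse x a) : IsPseudoInverse (f x) (f a) := by
  simp only [IsPseudoInverse, ← map_mul, h.1, h.2, and_self]

end IsPseudoInverse

theorem isPseudoInverse_inv {G₀ : Type*} [CommGroupWithZero G₀] (x : G₀) :
    IsPseudoInverse x x⁻¹ :=
  ⟨mul_self_mul_inv x, by simpa using mul_self_mul_inv x⁻¹⟩

theorem exists_isPseudoInverse_of_finite {R : Type*} [CommRing R] [Finite R] [IsReduced R]
    (x : R) : ∃ a, IsPseudoInverse x a := by
  let _ (I : MaximalSpectrum R) : Field (R ⧸ I.asIdeal) := Ideal.Quotient.field _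
  let e := (IsArtinianRing.equivPi R).toRingEquiv
  have h : IsPseudoInverse (e x) fun I => (e x I)⁻¹ :=
    ⟨funext fun I => (isPseudoInverse_inv (e x I)).1,
      funext fun I => (isPseudoInverse_inv (e x I)).2⟩
  exact ⟨_, by simpa using h.map e.symm⟩

theorem eq_zero_of_intCast_mul_eq_zero {R : Type*} [CommRing R] [CharZero R] {c : R} {N z : ℤ}
    (hN : N ≠ 0) (hc : (N : R) * (1 - c) = 0) (hz : (z : R) * c = 0) : z = 0 := by
  have hNz : ((N * z : ℤ) : R) = 0 := by
    push_cast
    linear_combination (N : R) * hz + (z : R) * hc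
  exact (mul_eq_zero.1 (Int.cast_eq_zero.1 hNz)).resolve_left hN

structure IsDivisiveMeadow {R : Type*} [CommRing R] (d : R → R → R) : Prop where
  inv_inv : ∀ x, d 1 (d 1 x) = x
  mul_self_div_self : ∀ x, d (x * x) x = x
  div_eq_mul_one_div : ∀ x y, d x y = x * d 1 y

namespace IsDivisiveMeadow

variable {R : Type*} [CommRing R] {d : R → R → R} (hd : IsDivisiveMeadow d)
include hd

theorem isPseudoInverse_one_div (x : R) : IsPseudoInverse x (d 1 x) := by
  have h (y : R) : y * y * d 1 y = y := by rw [← hd.div_eq_mul_one_div, hd.mul_self_div_self]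
  exact ⟨h x, by simpa only [hd.inv_inv] using h (d 1 x)⟩

theorem one_div_eq {x a : R} (h : IsPseudoInverse x a) : d 1 x = a :=
  (hd.isPseudoInverse_one_div x).unique h

theorem isReduced : IsReduced R := by
  refine (isReduced_iff_pow_one_lt 2 one_lt_two).2 fun x hx => ?_
  rw [← (hd.isPseudoInverse_one_div x).1, ← sq, hx, zero_mul]

theorem map_div {K F : Type*} [Field K] [FunLike F K R] [RingHomClass F K R] (f : F) (a b : K) :
    f (a / b) = d (f a) (f b) := by
  rw [hd.div_eq_mul_one_div, hd.one_div_eq ((isPseudoInverse_inv b).map f), div_eq_mul_inv,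
    map_mul]

theorem div_mem_of_finite (S : Subring R) (hS : (S : Set R).Finite) {x y : R} (hx : x ∈ S)
    (hy : y ∈ S) : d x y ∈ S := by
  have := hS.to_subtype
  have := hd.isReduced
  have : IsReduced S := isReduced_of_injective S.subtype Subtype.val_injective
  obtain ⟨a, ha⟩ := exists_isPseudoInverse_of_finite (⟨y, hy⟩ : S)
  rw [hd.div_eq_mul_one_div, hd.one_div_eq (x := y) (ha.map S.subtype)]
  exact S.mul_mem hx a.2

theorem charZero [Infinite R]
    (hmin : ∀ S : Subring R, (∀ x y : R, x ∈ S → y ∈ S → d x y ∈ S) → S = ⊤) : CharZero R := by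
  by_contra h
  obtain ⟨p, hp⟩ := CharP.exists R
  have : NeZero p := ⟨fun hp0 => h (by subst hp0; exact CharP.charP_to_charZero R)⟩
  have hbot : ((⊥ : Subring R) : Set R).Finite := by
    refine (Set.finite_range (ZMod.castHom (dvd_refl p) R)).subset ?_
    rintro _ ⟨z, rfl⟩
    exact ⟨z, map_intCast _ z⟩
  have htop := hmin ⊥ fun x y => hd.div_mem_of_finite ⊥ hbot
  rw [htop, Subring.coe_top, Set.finite_univ_iff] at hbot
  exact not_finite R

theorem natCast_mul_one_div_natCast_eq_one [CharZero R] {k : ℕ} (hk : k ≠ 0) {n m : ℤ}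
    (h : 1 + d 1 (k : R) = d n m) : (k : R) * d 1 k = 1 := by
  rw [hd.div_eq_mul_one_div (n : R)] at h
  obtain ⟨hk₁, hk₂⟩ := hd.isPseudoInverse_one_div (k : R)
  obtain ⟨hm₁, hm₂⟩ := hd.isPseudoInverse_one_div (m : R)
  set ik := d 1 (k : R)
  set im := d 1 (m : R)
  have hc : (((k * k + k : ℕ) : ℤ) : R) * (1 - k * ik * (m * im)) = 0 := by
    push_cast
    linear_combination -((k : R) + 1) * hk₁
      + k * ik * (k * k * ((1 - m * im) * h - n * hm₂) - (1 - m * im) * hk₁)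
  have hcancel : ((((k : ℤ) + 1) * m - n * k : ℤ) : R) * (k * ik * (m * im)) = 0 := by
    push_cast
    linear_combination k * m * (k * ik * (m * im)) * h - m * (m * im) * ik * hk₁
      + n * k * (k * ik) * im * hm₁
  have hkm : ((k : ℤ) + 1) * m = n * k :=
    sub_eq_zero.1 (eq_zero_of_intCast_mul_eq_zero (by positivity) hc hcancel)
  have hmk : (m : R) = k * (n - m) := by
    exact_mod_cast (by linear_combination hkm : m = k * (n - m))
  have hku : (k : R) * (1 - k * ik) = 0 := by linear_combination -hk₁
  have himu : im * (1 - k * ik) = 0 := by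
    linear_combination im * im * (1 - k * ik) * hmk + im * im * (n - m) * hku - (1 - k * ik) * hm₂
  linear_combination -(1 - k * ik) * h - n * himu - hk₂

theorem isUnit_intCast [CharZero R]
    (hclosed : ∀ k : ℕ, 0 < k → ∃ n m : ℤ, 1 + d 1 (k : R) = d n m) {z : ℤ} (hz : z ≠ 0) :
    IsUnit (z : R) := by
  obtain ⟨n, m, h⟩ := hclosed z.natAbs (Int.natAbs_pos.2 hz)
  have hunit : IsUnit (z.natAbs : R) :=
    .of_mul_eq_one _ (hd.natCast_mul_one_div_natCast_eq_one (Int.natAbs_ne_zero.2 hz) h)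
  rcases Int.natAbs_eq z with hz' | hz' <;> rw [hz'] <;> simp only [Int.cast_neg, Int.cast_natCast]
  exacts [hunit, hunit.neg]

theorem exists_ringEquiv_of_surjective [Nontrivial R] {K : Type*} [Field K] (f : K →+* R)
    (hf : Function.Surjective f) : ∃ e : R ≃+* K, ∀ x y : R, e (d x y) = e x / e y := by
  let e := RingEquiv.ofBijective f ⟨f.injective, hf⟩
  refine ⟨e.symm, fun x y => e.injective ?_⟩
  rw [e.apply_symm_apply, hd.map_div e, e.apply_symm_apply, e.apply_symm_apply]

end IsDivisiveMeadow

theorem infinite_minimal_closed_simple_fractions_iso_rat {R : Type*} [CommRing R]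
    (d : R → R → R)
    (h1 : ∀ x : R, d 1 (d 1 x) = x) (h2 : ∀ x : R, d (x * x) x = x)
    (h3 : ∀ x y : R, d x y = x * d 1 y)
    (hinf : Infinite R)
    (hmin : ∀ S : Subring R, (∀ x y : R, x ∈ S → y ∈ S → d x y ∈ S) → S = ⊤)
    (hclosed : ∀ k : ℕ, 0 < k → ∃ n m : ℤ,
      1 + d 1 ((k : R)) = d ((n : R)) ((m : R))) :
    ∃ e : R ≃+* ℚ, ∀ x y : R, e (d x y) = e x / e y := by
  have hd : IsDivisiveMeadow d := ⟨h1, h2, h3⟩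
  have := hd.charZero hmin
  let f : ℚ →+* R := IsLocalization.lift (M := nonZeroDivisors ℤ) (g := Int.castRingHom R)
    fun z => hd.isUnit_intCast hclosed (nonZeroDivisors.coe_ne_zero z)
  refine hd.exists_ringEquiv_of_surjective f (RingHom.range_eq_top.1 (hmin f.range ?_))
  rintro _ _ ⟨a, rfl⟩ ⟨b, rfl⟩
  exact ⟨a / b, hd.map_div f a b⟩
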